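/- arXiv:2209.10129 — 6 statements merged into one kernel-verified Lean document; each statement's English description precedes it below -/
import Mathlib

section
/- Let c > 1 and u₀ = (3c − √(c²+8))/2. Then f(c) := u₀ + (c/2)u₀² − (1/6)u₀³ − c·ln(c/(c−u₀)) is strictly positive. Equivalently, −(1/6)(2+c²)(√(c²+8) − 3c) − c·ln((1/4)c(c+√(c²+8))) > 0 for all c > 1. -/
/-!
Write `s = √(c² + 8)`, so that `u₀ = (3c - s)/2` and `s² = c² + 8`. Eliminating `s²` turns the
cubic part of `f(c)` into `(c² + 2)/6 · (3c - s)` and the argument of the logarithm into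
`x = c(c + s)/4 ≥ 1`, whose inverse is `(s - c)/(2c)`. The bound `log x ≤ sinh (log x) = (x - x⁻¹)/2`
then reduces positivity to the algebraic inequality `s(7c² + 2) < 9c(c² + 2)`, which after squaring
is `0 < 32(c² - 1)³`.
-/

open Real

theorem Real.log_le_half_sub_inv {x : ℝ} (hx : 1 ≤ x) : log x ≤ (x - x⁻¹) / 2 := by
  rw [← sinh_log (by linarith)]
  exact self_le_sinh_iff.2 (log_nonneg hx)

namespace DissipationIntegral

variable {c s : ℝ}

theorem cubic_eq_of_sq_eq (hs : s ^ 2 = c ^ 2 + 8) :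
    (3 * c - s) / 2 + c / 2 * ((3 * c - s) / 2) ^ 2 - 1 / 6 * ((3 * c - s) / 2) ^ 3
      = (c ^ 2 + 2) / 6 * (3 * c - s) := by
  linear_combination (s / 48 - c / 16) * hs

theorem lt_of_sq_eq (hs : s ^ 2 = c ^ 2 + 8) (hs0 : 0 ≤ s) : c < s := by
  nlinarith

theorem div_sub_eq_of_sq_eq (hs : s ^ 2 = c ^ 2 + 8) (hs0 : 0 ≤ s) :
    c / (c - (3 * c - s) / 2) = c * (c + s) / 4 := by
  have hsc : s - c ≠ 0 := (sub_pos.2 (lt_of_sq_eq hs hs0)).ne'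
  rw [show c - (3 * c - s) / 2 = (s - c) / 2 by ring, div_div_eq_mul_div,
    div_eq_div_iff hsc four_ne_zero]
  linear_combination (-c) * hs

theorem mul_lt_of_sq_eq (hs : s ^ 2 = c ^ 2 + 8) (hs0 : 0 ≤ s) (hc : 1 < c) :
    s * (7 * c ^ 2 + 2) < 9 * c * (c ^ 2 + 2) := by
  have hc0 : 0 < c := by linarith
  refine (pow_lt_pow_iff_left₀ (by positivity) (by positivity) two_ne_zero).1 ?_
  have hcube : 0 < (c ^ 2 - 1) ^ 3 := pow_pos (by nlinarith) 3
  nlinarith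

theorem mul_log_le_of_sq_eq (hs : s ^ 2 = c ^ 2 + 8) (hs0 : 0 ≤ s) (hc : 1 < c) :
    c * log (c * (c + s) / 4) ≤ c ^ 2 * (c + s) / 8 - (s - c) / 4 := by
  have hc0 : 0 < c := by linarith
  have hx : 1 ≤ c * (c + s) / 4 := by nlinarith [lt_of_sq_eq hs hs0]
  have hinv : (c * (c + s) / 4)⁻¹ = (s - c) / (2 * c) := by
    refine inv_eq_of_mul_eq_one_right ?_
    field_simp
    linear_combination hs
  calc c * log (c * (c + s) / 4) ≤ c * ((c * (c + s) / 4 - (s - c) / (2 * c)) / 2) := by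
        rw [← hinv]
        exact mul_le_mul_of_nonneg_left (log_le_half_sub_inv hx) hc0.le
    _ = c ^ 2 * (c + s) / 8 - (s - c) / 4 := by
        field_simp
        ring

theorem mul_log_lt_of_sq_eq (hs : s ^ 2 = c ^ 2 + 8) (hs0 : 0 ≤ s) (hc : 1 < c) :
    c * log (c * (c + s) / 4) < (c ^ 2 + 2) / 6 * (3 * c - s) := by
  have := mul_lt_of_sq_eq hs hs0 hc
  linarith [mul_log_le_of_sq_eq hs hs0 hc]

end DissipationIntegral

theorem dissipation_integral_positive (c : ℝ) (hc : 1 < c) :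
    (0 < (3 * c - Real.sqrt (c ^ 2 + 8)) / 2
        + c / 2 * ((3 * c - Real.sqrt (c ^ 2 + 8)) / 2) ^ 2
        - 1 / 6 * ((3 * c - Real.sqrt (c ^ 2 + 8)) / 2) ^ 3
        - c * Real.log (c / (c - (3 * c - Real.sqrt (c ^ 2 + 8)) / 2))) ∧
    (0 < -(1 / 6) * (2 + c ^ 2) * (Real.sqrt (c ^ 2 + 8) - 3 * c)
        - c * Real.log (1 / 4 * c * (c + Real.sqrt (c ^ 2 + 8)))) := by
  set s := √(c ^ 2 + 8)
  have hs : s ^ 2 = c ^ 2 + 8 := sq_sqrt (by positivity)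
  have hs0 : 0 ≤ s := sqrt_nonneg _
  have key := DissipationIntegral.mul_log_lt_of_sq_eq hs hs0 hc
  constructor
  · rw [DissipationIntegral.cubic_eq_of_sq_eq hs, DissipationIntegral.div_sub_eq_of_sq_eq hs hs0]
    linarith
  · rw [show 1 / 4 * c * (c + s) = c * (c + s) / 4 by ring]
    linarith
end

section
/- The function f(c) = −(1/6)(2+c²)(√(c²+8) − 3c) − c·ln((1/4)c(c+√(c²+8))) satisfies f(1) = 0, f'(1) = 0, and f''(c) > 0 for all c > 1. -/
/-!
With `s = √(c² + 8)` one has `f'(c) = 3c²/2 - cs/2 - log(c(c + s)/4)` and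
`f''(c) = 3c - (c² + 5)/s - 1/c = (s(3c² - 1) - c(c² + 5)) / (cs)`.
At `c = 1` we have `s = 3`, so `f(1) = f'(1) = 0`. The numerator of `f''` is positive for `c > 1`
because `(s(3c² - 1))² - (c(c² + 5))² = 8(c² - 1)(c⁴ + 8c² - 1)`.
-/

open Real Topology

section SqrtSqAdd

variable {a : ℝ}

theorem hasDerivAt_sqrt_sq_add (ha : 0 < a) (c : ℝ) :
    HasDerivAt (fun x => √(x ^ 2 + a)) (c / √(c ^ 2 + a)) c := by
  have hsq : HasDerivAt (fun x => x ^ 2 + a) (2 * c) c := by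
    simpa using (hasDerivAt_pow 2 c).add_const a
  convert hsq.sqrt (by positivity) using 1
  have : 0 < √(c ^ 2 + a) := sqrt_pos.mpr (by positivity)
  field_simp

theorem add_sqrt_sq_add_pos (ha : 0 < a) (c : ℝ) : 0 < c + √(c ^ 2 + a) := by
  have : |c| < √(c ^ 2 + a) := by
    rw [← sqrt_sq_eq_abs]
    exact sqrt_lt_sqrt (sq_nonneg c) (by linarith)
  linarith [neg_abs_le c]

theorem hasDerivAt_log_add_sqrt_sq_add (ha : 0 < a) (c : ℝ) :
    HasDerivAt (fun x => log (x + √(x ^ 2 + a))) (1 / √(c ^ 2 + a)) c := by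
  have hpos := add_sqrt_sq_add_pos ha c
  refine (((hasDerivAt_id' c).add (hasDerivAt_sqrt_sq_add ha c)).log hpos.ne').congr_deriv ?_
  have : 0 < √(c ^ 2 + a) := sqrt_pos.mpr (by positivity)
  rw [Pi.add_apply]
  field_simp
  ring

theorem hasDerivAt_log_mul_mul_add_sqrt_sq_add (ha : 0 < a) {b c : ℝ} (hb : b ≠ 0) (hc : c ≠ 0) :
    HasDerivAt (fun x => log (b * x * (x + √(x ^ 2 + a)))) (1 / c + 1 / √(c ^ 2 + a)) c := by
  have hbx : HasDerivAt (fun x => log (b * x)) (1 / c) c := by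
    refine (((hasDerivAt_id' c).const_mul b).log (mul_ne_zero hb hc)).congr_deriv ?_
    field_simp
  refine (hbx.add (hasDerivAt_log_add_sqrt_sq_add ha c)).congr_of_eventuallyEq ?_
  filter_upwards [eventually_ne_nhds hc] with x hx
  exact log_mul (mul_ne_zero hb hx) (add_sqrt_sq_add_pos ha x).ne'

end SqrtSqAdd

namespace FConvexity

noncomputable def f (c : ℝ) : ℝ :=
  -(1 / 6) * (2 + c ^ 2) * (√(c ^ 2 + 8) - 3 * c) - c * log (1 / 4 * c * (c + √(c ^ 2 + 8)))

noncomputable def f' (c : ℝ) : ℝ :=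
  3 / 2 * c ^ 2 - 1 / 2 * c * √(c ^ 2 + 8) - log (1 / 4 * c * (c + √(c ^ 2 + 8)))

noncomputable def f'' (c : ℝ) : ℝ :=
  3 * c - (c ^ 2 + 5) / √(c ^ 2 + 8) - 1 / c

theorem sqrt_one_sq_add_eight : √((1 : ℝ) ^ 2 + 8) = 3 := by
  rw [show (1 : ℝ) ^ 2 + 8 = 3 ^ 2 by norm_num, sqrt_sq (by norm_num)]

theorem f_one : f 1 = 0 := by
  simp only [f, sqrt_one_sq_add_eight]
  norm_num

theorem f'_one : f' 1 = 0 := by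
  simp only [f', sqrt_one_sq_add_eight]
  norm_num

theorem hasDerivAt_f {c : ℝ} (hc : c ≠ 0) : HasDerivAt f (f' c) c := by
  have hs := hasDerivAt_sqrt_sq_add (by norm_num : (0 : ℝ) < 8) c
  have hpoly : HasDerivAt (fun x : ℝ => -(1 / 6) * (2 + x ^ 2)) (-(1 / 6) * (2 * c)) c := by
    simpa using ((hasDerivAt_pow 2 c).const_add 2).const_mul (-(1 / 6) : ℝ)
  have hlog := hasDerivAt_log_mul_mul_add_sqrt_sq_add (by norm_num : (0 : ℝ) < 8)
    (by norm_num : (1 / 4 : ℝ) ≠ 0) hc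
  refine ((hpoly.mul (hs.sub ((hasDerivAt_id' c).const_mul 3))).sub
    ((hasDerivAt_id' c).mul hlog)).congr_deriv ?_
  have hs2 : √(c ^ 2 + 8) ^ 2 = c ^ 2 + 8 := sq_sqrt (by positivity)
  have : 0 < √(c ^ 2 + 8) := sqrt_pos.mpr (by positivity)
  simp only [f', Pi.sub_apply]
  field_simp
  linear_combination 2 * c * hs2

theorem hasDerivAt_f' {c : ℝ} (hc : c ≠ 0) : HasDerivAt f' (f'' c) c := by
  have hs := hasDerivAt_sqrt_sq_add (by norm_num : (0 : ℝ) < 8) c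
  have hlog := hasDerivAt_log_mul_mul_add_sqrt_sq_add (by norm_num : (0 : ℝ) < 8)
    (by norm_num : (1 / 4 : ℝ) ≠ 0) hc
  refine ((((hasDerivAt_pow 2 c).const_mul (3 / 2)).sub
    (((hasDerivAt_id' c).const_mul (1 / 2)).mul hs)).sub hlog).congr_deriv ?_
  have hs2 : √(c ^ 2 + 8) ^ 2 = c ^ 2 + 8 := sq_sqrt (by positivity)
  have : 0 < √(c ^ 2 + 8) := sqrt_pos.mpr (by positivity)
  simp only [f'']
  field_simp
  linear_combination -c * hs2

theorem deriv_f_eventuallyEq {c : ℝ} (hc : c ≠ 0) : deriv f =ᶠ[𝓝 c] f' := by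
  filter_upwards [eventually_ne_nhds hc] with x hx
  exact (hasDerivAt_f hx).deriv

theorem mul_lt_sqrt_mul {c : ℝ} (hc : 1 < c) :
    c * (c ^ 2 + 5) < √(c ^ 2 + 8) * (3 * c ^ 2 - 1) := by
  have hs2 : √(c ^ 2 + 8) ^ 2 = c ^ 2 + 8 := sq_sqrt (by positivity)
  have hgap : (√(c ^ 2 + 8) * (3 * c ^ 2 - 1)) ^ 2 - (c * (c ^ 2 + 5)) ^ 2
      = 8 * (c ^ 2 - 1) * (c ^ 4 + 8 * c ^ 2 - 1) := by
    linear_combination (3 * c ^ 2 - 1) ^ 2 * hs2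
  have hsq : (c * (c ^ 2 + 5)) ^ 2 < (√(c ^ 2 + 8) * (3 * c ^ 2 - 1)) ^ 2 := by
    have : 0 < 8 * (c ^ 2 - 1) * (c ^ 4 + 8 * c ^ 2 - 1) := by
      have : 1 < c ^ 2 := by nlinarith
      have : 0 < c ^ 4 + 8 * c ^ 2 - 1 := by nlinarith
      positivity
    linarith
  have hs : 0 < √(c ^ 2 + 8) := sqrt_pos.mpr (by positivity)
  exact (pow_lt_pow_iff_left₀ (by positivity) (by nlinarith) two_ne_zero).mp hsq

theorem f''_pos {c : ℝ} (hc : 1 < c) : 0 < f'' c := by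
  have hs : 0 < √(c ^ 2 + 8) := sqrt_pos.mpr (by positivity)
  have hc0 : 0 < c := by linarith
  have hnum : f'' c = (√(c ^ 2 + 8) * (3 * c ^ 2 - 1) - c * (c ^ 2 + 5)) / (c * √(c ^ 2 + 8)) := by
    simp only [f'']
    field_simp
    ring
  rw [hnum]
  exact div_pos (sub_pos.mpr (mul_lt_sqrt_mul hc)) (by positivity)

end FConvexity

theorem f_convexity_properties :
    let f : ℝ → ℝ := fun c =>
      -(1 / 6) * (2 + c ^ 2) * (Real.sqrt (c ^ 2 + 8) - 3 * c)
        - c * Real.log (1 / 4 * c * (c + Real.sqrt (c ^ 2 + 8)))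
    f 1 = 0 ∧ deriv f 1 = 0 ∧ ∀ c : ℝ, 1 < c → 0 < deriv (deriv f) c := by
  intro f
  refine ⟨FConvexity.f_one, (FConvexity.hasDerivAt_f one_ne_zero).deriv.trans FConvexity.f'_one,
    fun c hc => ?_⟩
  have hc0 : c ≠ 0 := (zero_lt_one.trans hc).ne'
  have hf'' : deriv (deriv f) c = FConvexity.f'' c :=
    (FConvexity.deriv_f_eventuallyEq hc0).deriv_eq.trans (FConvexity.hasDerivAt_f' hc0).deriv
  exact hf''.symm ▸ FConvexity.f''_pos hc
end

section
/- For c > 1 and δ > 0, the potential G(u) = δc·[(1/6)u³ − (c/2)u² − u + c·ln(c/(c−u))] on (0, c) has a strict local minimum at u₀ = (3c − √(c²+8))/2 and tends to +∞ as u → c⁻. -/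
/-!
Write `G = δ c P` with `P = potential c`. Then
`P'(u) = u²/2 - c u - 1 + c/(c - u) = u (u - u₀) (u₁ - u) / (2 (c - u))`, where
`u₀ < u₁ = (3c + √(c² + 8))/2` are the roots of `u² - 3cu + 2(c² - 1)`. Since `0 < u₀ < c < u₁`,
`P'` changes sign from negative to positive at `u₀`, so `P` decreases strictly on `(0, u₀]` and
increases strictly on `[u₀, c)`. As `u → c⁻` the term `c log (c/(c - u))` tends to `+∞` while the
cubic part stays bounded.
-/

open Filter Set Topology

theorem eventually_lt_of_hasDerivAt_neg_of_pos {f f' : ℝ → ℝ} {a b x₀ : ℝ} (ha : a < x₀)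
    (hb : x₀ < b) (hf : ∀ x ∈ Ioo a b, HasDerivAt f (f' x) x)
    (hneg : ∀ x ∈ Ioo a x₀, f' x < 0) (hpos : ∀ x ∈ Ioo x₀ b, 0 < f' x) :
    ∀ᶠ x in 𝓝[≠] x₀, f x₀ < f x := by
  have hcont : ContinuousOn f (Ioo a b) := fun x hx => (hf x hx).continuousAt.continuousWithinAt
  have hanti : StrictAntiOn f (Ioc a x₀) := by
    refine strictAntiOn_of_deriv_neg (convex_Ioc a x₀) (hcont.mono (Ioc_subset_Ioo_right hb)) ?_
    rw [interior_Ioc]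
    intro x hx
    rw [(hf x ⟨hx.1, hx.2.trans hb⟩).deriv]
    exact hneg x hx
  have hmono : StrictMonoOn f (Ico x₀ b) := by
    refine strictMonoOn_of_deriv_pos (convex_Ico x₀ b) (hcont.mono (Ico_subset_Ioo_left ha)) ?_
    rw [interior_Ico]
    intro x hx
    rw [(hf x ⟨ha.trans hx.1, hx.2⟩).deriv]
    exact hpos x hx
  filter_upwards [mem_nhdsWithin_of_mem_nhds (Ioo_mem_nhds ha hb), self_mem_nhdsWithin]
    with x hx hne
  rcases lt_or_gt_of_ne hne with hlt | hgt
  · exact hanti ⟨hx.1, hlt.le⟩ ⟨ha, le_rfl⟩ hlt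
  · exact hmono ⟨le_rfl, hb⟩ ⟨hgt.le, hx.2⟩ hgt

noncomputable section

namespace Potential

def potential (c u : ℝ) : ℝ :=
  1 / 6 * u ^ 3 - c / 2 * u ^ 2 - u + c * Real.log (c / (c - u))

variable {c x s : ℝ}

theorem hasDerivAt_potential (hc : c ≠ 0) (hx : x ≠ c) :
    HasDerivAt (potential c) (x ^ 2 / 2 - c * x - 1 + c / (c - x)) x := by
  have hcx : c - x ≠ 0 := sub_ne_zero.2 hx.symm
  have hpoly : HasDerivAt (fun u : ℝ => 1 / 6 * u ^ 3 - c / 2 * u ^ 2 - u)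
      (1 / 6 * (3 * x ^ 2) - c / 2 * (2 * x) - 1) x := by
    have h3 : HasDerivAt (fun u : ℝ => u ^ 3) (3 * x ^ 2) x := by
      simpa using hasDerivAt_pow 3 x
    have h2 : HasDerivAt (fun u : ℝ => u ^ 2) (2 * x) x := by
      simpa using hasDerivAt_pow 2 x
    exact ((h3.const_mul _).sub (h2.const_mul _)).sub (hasDerivAt_id x)
  have hlog := ((hasDerivAt_const x c).div ((hasDerivAt_id x).const_sub c) hcx).log
    (div_ne_zero hc hcx)
  refine (hpoly.add (hlog.const_mul c)).congr_deriv ?_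
  simp only [id, Pi.div_apply]
  field_simp
  ring

theorem potential_deriv_eq (hs : s ^ 2 = c ^ 2 + 8) (hx : x ≠ c) :
    x ^ 2 / 2 - c * x - 1 + c / (c - x) =
      x * (x - (3 * c - s) / 2) * ((3 * c + s) / 2 - x) / (2 * (c - x)) := by
  have hcx : c - x ≠ 0 := sub_ne_zero.2 hx.symm
  field_simp
  linear_combination (-x) * hs

theorem eventually_potential_lt (hc : 1 < c) :
    ∀ᶠ u in 𝓝[≠] ((3 * c - √(c ^ 2 + 8)) / 2),
      potential c ((3 * c - √(c ^ 2 + 8)) / 2) < potential c u := by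
  set s := √(c ^ 2 + 8)
  have hs : s ^ 2 = c ^ 2 + 8 := Real.sq_sqrt (by positivity)
  have hs0 : 0 ≤ s := Real.sqrt_nonneg _
  have hcs : c < s := by nlinarith
  have hs3c : s < 3 * c := by nlinarith
  refine eventually_lt_of_hasDerivAt_neg_of_pos (a := 0) (b := c) (by linarith) (by linarith)
    (fun x hx => hasDerivAt_potential (by positivity) hx.2.ne) (fun x hx => ?_) (fun x hx => ?_)
  all_goals
    obtain ⟨hx0, hx1⟩ := hx
    rw [potential_deriv_eq hs (by linarith)]
  · refine div_neg_of_neg_of_pos ?_ (by linarith)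
    exact mul_neg_of_neg_of_pos (mul_neg_of_pos_of_neg hx0 (by linarith)) (by linarith)
  · refine div_pos ?_ (by linarith)
    exact mul_pos (mul_pos (by linarith) (by linarith)) (by linarith)

theorem tendsto_potential_atTop (hc : 0 < c) : Tendsto (potential c) (𝓝[<] c) atTop := by
  have hgap : Tendsto (fun u => c - u) (𝓝[<] c) (𝓝[>] 0) := by
    refine tendsto_nhdsWithin_of_tendsto_nhds_of_eventually_within _ ?_ ?_
    · simpa using ((continuous_sub_left c).tendsto c).mono_left nhdsWithin_le_nhds
    · filter_upwards [self_mem_nhdsWithin] with u hu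
      exact sub_pos.2 (mem_Iio.1 hu)
  have hratio : Tendsto (fun u => c / (c - u)) (𝓝[<] c) atTop := by
    simpa only [div_eq_mul_inv, Function.comp_def] using (tendsto_inv_nhdsGT_zero.comp hgap).const_mul_atTop hc
  have hpoly : Tendsto (fun u : ℝ => 1 / 6 * u ^ 3 - c / 2 * u ^ 2 - u) (𝓝[<] c)
      (𝓝 (1 / 6 * c ^ 3 - c / 2 * c ^ 2 - c)) :=
    ((Continuous.tendsto (by fun_prop) c).mono_left nhdsWithin_le_nhds)
  exact hpoly.add_atTop ((Real.tendsto_log_atTop.comp hratio).const_mul_atTop hc)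

end Potential

end

open Potential in
theorem potential_min_and_blowup (δ c : ℝ) (hδ : 0 < δ) (hc : 1 < c) :
    let G : ℝ → ℝ := fun u =>
      δ * c * (1 / 6 * u ^ 3 - c / 2 * u ^ 2 - u + c * Real.log (c / (c - u)))
    let u₀ : ℝ := (3 * c - Real.sqrt (c ^ 2 + 8)) / 2
    (∀ᶠ u in nhdsWithin u₀ {u₀}ᶜ, G u₀ < G u) ∧
    Filter.Tendsto G (nhdsWithin c (Set.Iio c)) Filter.atTop := by
  intro G u₀
  have hδc : 0 < δ * c := by positivity
  refine ⟨?_, (tendsto_potential_atTop (by positivity)).const_mul_atTop hδc⟩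
  filter_upwards [eventually_potential_lt hc] with u hu
  exact mul_lt_mul_of_pos_left hu hδc
end

section
/- For every c > 1, one has 0 < c − c^{1/3} < u₀, where u₀ = (3c − √(c²+8))/2. -/
theorem uc_bounds (c : ℝ) (hc : 1 < c) :
    0 < c - c ^ ((1 : ℝ) / 3) ∧
    c - c ^ ((1 : ℝ) / 3) < (3 * c - Real.sqrt (c ^ 2 + 8)) / 2 := by
  have hc0 : (0 : ℝ) < c := lt_trans one_pos hc
  set t := c ^ ((1 : ℝ) / 3) with ht
  have ht1 : 1 < t := by
    rw [ht]
    exact Real.one_lt_rpow_iff_of_pos hc0 |>.mpr (Or.inl ⟨hc, by norm_num⟩)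
  have hct : c = t ^ 3 := by
    rw [ht, ← Real.rpow_natCast (c ^ ((1:ℝ)/3)) 3, ← Real.rpow_mul hc0.le]
    norm_num
  have hsq : Real.sqrt (c ^ 2 + 8) < t ^ 3 + 2 * t := by
    rw [Real.sqrt_lt' (by nlinarith)]
    nlinarith [sq_nonneg t, sq_nonneg (t^2 - 1)]
  constructor
  · have : t < c := by nlinarith [sq_nonneg (t-1), sq_nonneg t]
    linarith
  · nlinarith
end

section
/- Let c > 1, u₀ = (3c − √(c²+8))/2, u₊ = 3c − u₀, and α = u₀ − c + c/(u₀−c)². Define D(u) = u² − (2α + u₊)u + 2αc. Then D(u₀) = 0, D'(u₀) < 0, and D is strictly decreasing on [0, u₀]; consequently D(u) > 0 for all 0 ≤ u < u₀. -/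
/-!
Writing `t = u₀ - c`, the defining equation of `u₀` becomes `t² = c t + 2`, i.e. `t - c = 2 / t`;
with `α = t + c / t²` this gives `D(u₀) = c (t - c - 2 / t) = 0`. Since `t < 0`, the vertex
`(2α + u₊) / 2` of the monic parabola `D` lies to the right of `u₀`, which gives the derivative and
monotonicity claims at once.
-/

open Set

lemma hasDerivAt_sq_sub_mul_add (b k x : ℝ) :
    HasDerivAt (fun u : ℝ => u ^ 2 - b * u + k) (2 * x - b) x := by
  simpa using ((hasDerivAt_pow 2 x).sub ((hasDerivAt_id x).const_mul b)).add_const k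

lemma strictAntiOn_sq_sub_mul_add (b k : ℝ) :
    StrictAntiOn (fun u : ℝ => u ^ 2 - b * u + k) (Iic (b / 2)) := by
  intro x hx y hy hxy
  simp only [mem_Iic] at hx hy
  nlinarith [mul_pos (sub_pos.mpr hxy) (show 0 < b - (x + y) by linarith)]

section SmallerRoot

variable {c : ℝ}

lemma smaller_root_sub_sq :
    ((3 * c - √(c ^ 2 + 8)) / 2 - c) ^ 2 = c * ((3 * c - √(c ^ 2 + 8)) / 2 - c) + 2 := by
  linear_combination Real.sq_sqrt (show (0 : ℝ) ≤ c ^ 2 + 8 by positivity) / 4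

lemma smaller_root_lt : (3 * c - √(c ^ 2 + 8)) / 2 < c := by
  have : |c| < √(c ^ 2 + 8) := by
    rw [← Real.sqrt_sq_eq_abs]
    exact Real.sqrt_lt_sqrt (sq_nonneg c) (by linarith)
  linarith [le_abs_self c]

lemma smaller_root_pos (hc : 1 < c) : 0 < (3 * c - √(c ^ 2 + 8)) / 2 := by
  have : √(c ^ 2 + 8) < 3 * c := by
    rw [Real.sqrt_lt' (by linarith)]
    nlinarith
  linarith

end SmallerRoot

section Quadratic

variable {c u : ℝ}

lemma quadratic_eq_zero_of_sub_sq (hu : (u - c) ^ 2 = c * (u - c) + 2) (hne : u ≠ c) :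
    u ^ 2 - (2 * (u - c + c / (u - c) ^ 2) + (3 * c - u)) * u
      + 2 * (u - c + c / (u - c) ^ 2) * c = 0 := by
  have ht : u - c ≠ 0 := sub_ne_zero.mpr hne
  field_simp
  linear_combination c * (u - c) * hu

lemma lt_vertex_of_lt (hc : 0 < c) (hu : u < c) :
    2 * u < 2 * (u - c + c / (u - c) ^ 2) + (3 * c - u) := by
  have : 0 < c / (u - c) ^ 2 := div_pos hc (sq_pos_of_neg (sub_neg.mpr hu))
  linarith

end Quadratic

theorem D_properties (c : ℝ) (hc : 1 < c) :
    let u₀ : ℝ := (3 * c - Real.sqrt (c ^ 2 + 8)) / 2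
    let uPlus : ℝ := 3 * c - u₀
    let α : ℝ := u₀ - c + c / (u₀ - c) ^ 2
    let D : ℝ → ℝ := fun u => u ^ 2 - (2 * α + uPlus) * u + 2 * α * c
    D u₀ = 0 ∧ deriv D u₀ < 0 ∧ StrictAntiOn D (Set.Icc 0 u₀) ∧
    ∀ u : ℝ, 0 ≤ u → u < u₀ → 0 < D u := by
  intro u₀ uPlus α D
  have hu₀c : u₀ < c := smaller_root_lt
  have hvertex : 2 * u₀ < 2 * α + uPlus := lt_vertex_of_lt (by linarith) hu₀c
  have hroot : D u₀ = 0 := quadratic_eq_zero_of_sub_sq smaller_root_sub_sq hu₀c.ne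
  have hanti : StrictAntiOn D (Icc 0 u₀) :=
    (strictAntiOn_sq_sub_mul_add _ _).mono fun x hx => by simp only [mem_Iic]; linarith [hx.2]
  refine ⟨hroot, ?_, hanti, fun u hu hlt => ?_⟩
  · rw [(hasDerivAt_sq_sub_mul_add _ _ u₀).deriv]
    linarith
  · rw [← hroot]
    exact hanti ⟨hu, hlt.le⟩ ⟨(smaller_root_pos hc).le, le_rfl⟩ hlt
end

section
/- For c > 1 and 0 ≤ u < u₀ = (3c − √(c²+8))/2, the inequality u·(u₊ − u) < 2α(c)·(c − u) holds, where u₊ = 3c − u₀ and α(c) = u₀ − c + c/(u₀−c)². -/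
theorem key_inequality (c u : ℝ) (hc : 1 < c) (hu : 0 ≤ u)
    (hu0 : u < (3 * c - Real.sqrt (c ^ 2 + 8)) / 2) :
    let u₀ : ℝ := (3 * c - Real.sqrt (c ^ 2 + 8)) / 2
    let uPlus : ℝ := 3 * c - u₀
    let α : ℝ := u₀ - c + c / (u₀ - c) ^ 2
    u * (uPlus - u) < 2 * α * (c - u) := by
  intro u₀ uPlus α
  have hc0 : (0:ℝ) < c := by linarith
  set s : ℝ := Real.sqrt (c ^ 2 + 8) with hs
  have h8 : (0:ℝ) ≤ c ^ 2 + 8 := by positivity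
  have hs2 : s ^ 2 = c ^ 2 + 8 := Real.sq_sqrt h8
  have hsnn : 0 ≤ s := Real.sqrt_nonneg _
  have hsc : c < s := by nlinarith
  have hs3 : s < 3 * c := by nlinarith
  have hu0' : u < u₀ := hu0
  have hu0c : u₀ - c = (c - s) / 2 := by simp only [u₀]; ring
  have hd2 : (0:ℝ) < (u₀ - c) ^ 2 := by
    have : u₀ - c ≠ 0 := by rw [hu0c]; intro h; nlinarith
    positivity
  have ht : 0 < c ^ 2 - c * s + 4 := by nlinarith [sq_nonneg (s - c)]
  have hQ : 0 < c * (c ^ 2 - c * s + 8) - (c ^ 2 - c * s + 4) * u := by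
    have h1 : 0 < (s - c) * (c ^ 2 + 2) := by nlinarith
    have h2 : u₀ = (3 * c - s) / 2 := rfl
    nlinarith [mul_lt_mul_of_pos_left hu0' ht]
  have hne : (u₀ - c) ^ 2 ≠ 0 := ne_of_gt hd2
  have hα : α = ((u₀ - c) ^ 3 + c) / (u₀ - c) ^ 2 := by
    simp only [α]; field_simp
  have hrw : 2 * α * (c - u) =
      (2 * ((u₀ - c) ^ 3 + c) * (c - u)) / (u₀ - c) ^ 2 := by
    rw [hα]; ring
  rw [hrw, lt_div_iff₀ hd2]
  have hup : uPlus = (3 * c + s) / 2 := by simp only [uPlus, u₀]; ring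
  have h2 : u₀ = (3 * c - s) / 2 := rfl
  rw [hup, h2] at *
  have key : 2 * (((3*c-s)/2 - c)^3 + c) * (c-u) - u * ((3*c+s)/2 - u) * ((3*c-s)/2 - c)^2
      = (1/2) * ((3*c-s)/2 - u) * (c*(c^2 - c*s + 8) - (c^2 - c*s + 4)*u) := by
    linear_combination (-(1/4)*c*s + (1/8)*s*u + (1/2)*c^2 - (5/8)*c*u + (1/4)*u^2) * hs2
  nlinarith [mul_pos (sub_pos.mpr hu0') hQ, key]
end
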